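/- For every integer k ≥ 2 and every x ∈ [-1,1], ∫_{-1}^{1} P_k(t)·|t - x| dt = 2 p_k(x), where p_k(t) = (1/(2^k k!)) d^{k-2}/dt^{k-2} (t^2 - 1)^k. -/

import Mathlib

/-!
Integrating by parts twice, `∫ₐᵇ f''(t) |t - x| dt = 2 f(x)` for every `x ∈ [a, b]` and every `C²`
function `f` whose value and derivative vanish at `a` and `b`: on each side of `x` the kernel
`|t - x|` is affine in `t`, so each half of the integral is a Taylor remainder. The polynomial
`f = D^{k-2} (X² - 1)^k` is such a function on `[-1, 1]`, with `f'' = D^k (X² - 1)^k`: since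
`(X² - 1)^{k-j}` divides `D^j (X² - 1)^k`, the latter vanishes at `±1` for `j < k`.
-/

/-- The classical Legendre polynomials via Rodrigues' formula. -/
noncomputable def legendreP (k : ℕ) : ℝ → ℝ :=
  fun t => (1 / (2 ^ k * (Nat.factorial k : ℝ))) *
    iteratedDeriv k (fun s : ℝ => (s ^ 2 - 1) ^ k) t

/-- `p_k(t) = (1/(2^k k!)) d^{k-2}/dt^{k-2} (t²-1)^k`. -/
noncomputable def legendrep (k : ℕ) : ℝ → ℝ :=
  fun t => (1 / (2 ^ k * (Nat.factorial k : ℝ))) *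
    iteratedDeriv (k - 2) (fun s : ℝ => (s ^ 2 - 1) ^ k) t

open Polynomial intervalIntegral MeasureTheory

theorem Polynomial.iteratedDeriv_eval {𝕜 : Type*} [NontriviallyNormedField 𝕜] (p : 𝕜[X])
    (n : ℕ) : iteratedDeriv n (fun x => p.eval x) = fun x => (derivative^[n] p).eval x := by
  induction n generalizing p with
  | zero => simp
  | succ n ih =>
    have hderiv : deriv (fun x => p.eval x) = fun x => (derivative p).eval x := by
      ext x; exact Polynomial.deriv p
    rw [iteratedDeriv_succ', hderiv, ih, Function.iterate_succ_apply]

theorem Polynomial.eval_iterate_derivative_pow_eq_zero {R : Type*} [CommRing R] {p : R[X]}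
    {a : R} (ha : p.IsRoot a) {j k : ℕ} (hjk : j < k) : (derivative^[j] (p ^ k)).eval a = 0 := by
  obtain ⟨r, hr⟩ := pow_sub_dvd_iterate_derivative_pow p k j
  rw [hr, eval_mul, eval_pow, ha.eq_zero, zero_pow (by omega), zero_mul]

section TaylorRemainder

variable {f f' f'' : ℝ → ℝ} {a b : ℝ}

theorem integral_mul_sub_right_eq_of_hasDerivAt
    (hf : ∀ t ∈ Set.uIcc a b, HasDerivAt f (f' t) t)
    (hf' : ∀ t ∈ Set.uIcc a b, HasDerivAt f' (f'' t) t)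
    (hint : IntervalIntegrable f'' volume a b) :
    ∫ t in a..b, f'' t * (b - t) = f b - f a - f' a * (b - a) := by
  have hderiv : ∀ t ∈ Set.uIcc a b,
      HasDerivAt (fun t => f' t * (b - t) + f t) (f'' t * (b - t)) t := fun t ht =>
    (((hf' t ht).mul ((hasDerivAt_id t).const_sub b)).add (hf t ht)).congr_deriv (by simp)
  rw [integral_eq_sub_of_hasDerivAt hderiv (hint.mul_continuousOn (by fun_prop))]
  ring

theorem integral_mul_sub_left_eq_of_hasDerivAt
    (hf : ∀ t ∈ Set.uIcc a b, HasDerivAt f (f' t) t)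
    (hf' : ∀ t ∈ Set.uIcc a b, HasDerivAt f' (f'' t) t)
    (hint : IntervalIntegrable f'' volume a b) :
    ∫ t in a..b, f'' t * (t - a) = f a - f b + f' b * (b - a) := by
  rw [Set.uIcc_comm] at hf hf'
  have h := integral_mul_sub_right_eq_of_hasDerivAt hf hf' hint.symm
  rw [integral_symm, ← intervalIntegral.integral_neg]
  simp only [← mul_neg, neg_sub]
  linear_combination h

theorem integral_mul_abs_sub_eq_of_hasDerivAt {x : ℝ} (hx : x ∈ Set.Icc a b)
    (hf : ∀ t ∈ Set.uIcc a b, HasDerivAt f (f' t) t)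
    (hf' : ∀ t ∈ Set.uIcc a b, HasDerivAt f' (f'' t) t)
    (hint : IntervalIntegrable f'' volume a b) :
    ∫ t in a..b, f'' t * |t - x| =
      2 * f x - f a - f b - f' a * (x - a) + f' b * (b - x) := by
  have hleft := Set.uIcc_subset_uIcc_left (Set.Icc_subset_uIcc hx)
  have hright := Set.uIcc_subset_uIcc_right (Set.Icc_subset_uIcc hx)
  have habs : IntervalIntegrable (fun t => f'' t * |t - x|) volume a b :=
    hint.mul_continuousOn (by fun_prop)
  have hl : ∫ t in a..x, f'' t * |t - x| = ∫ t in a..x, f'' t * (x - t) :=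
    integral_congr fun t ht => by
      rw [Set.uIcc_of_le hx.1] at ht
      simp only [abs_of_nonpos (sub_nonpos.2 ht.2), neg_sub]
  have hr : ∫ t in x..b, f'' t * |t - x| = ∫ t in x..b, f'' t * (t - x) :=
    integral_congr fun t ht => by
      rw [Set.uIcc_of_le hx.2] at ht
      simp only [abs_of_nonneg (sub_nonneg.2 ht.1)]
  rw [← integral_add_adjacent_intervals (habs.mono_set hleft) (habs.mono_set hright), hl, hr,
    integral_mul_sub_right_eq_of_hasDerivAt (fun t ht => hf t (hleft ht))
      (fun t ht => hf' t (hleft ht)) (hint.mono_set hleft),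
    integral_mul_sub_left_eq_of_hasDerivAt (fun t ht => hf t (hright ht))
      (fun t ht => hf' t (hright ht)) (hint.mono_set hright)]
  ring

end TaylorRemainder

theorem legendre_abs_integral (k : ℕ) (hk : 2 ≤ k) (x : ℝ)
    (hx : x ∈ Set.Icc (-1:ℝ) 1) :
    (∫ t in (-1:ℝ)..1, legendreP k t * |t - x|) = 2 * legendrep k x := by
  obtain ⟨m, rfl⟩ := Nat.exists_eq_add_of_le' hk
  set q : ℝ[X] := (X ^ 2 - 1) ^ (m + 2)
  set f : ℝ[X] := derivative^[m] q
  set c : ℝ := 1 / (2 ^ (m + 2) * ((m + 2).factorial : ℝ))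
  have hq : (fun s : ℝ => (s ^ 2 - 1) ^ (m + 2)) = fun s => q.eval s := by simp [q]
  have hP : ∀ t, legendreP (m + 2) t = c * (derivative (derivative f)).eval t := fun t => by
    rw [legendreP, hq, Polynomial.iteratedDeriv_eval, Function.iterate_succ_apply',
      Function.iterate_succ_apply']
  have hp : legendrep (m + 2) x = c * f.eval x := by
    rw [legendrep, hq, Polynomial.iteratedDeriv_eval, Nat.add_sub_cancel]
  have hvanish : ∀ j < m + 2, ∀ a : ℝ, a ^ 2 = 1 → (derivative^[j] q).eval a = 0 :=
    fun j hj a ha => eval_iterate_derivative_pow_eq_zero (by simp [ha]) hj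
  simp_rw [hP, mul_assoc, intervalIntegral.integral_const_mul]
  rw [integral_mul_abs_sub_eq_of_hasDerivAt hx (fun t _ => f.hasDerivAt t)
      (fun t _ => (derivative f).hasDerivAt t) ((Polynomial.continuous _).intervalIntegrable _ _),
    hvanish m (by omega) 1 (by norm_num), hvanish m (by omega) (-1) (by norm_num),
    ← Function.iterate_succ_apply' derivative,
    hvanish (m + 1) (by omega) 1 (by norm_num), hvanish (m + 1) (by omega) (-1) (by norm_num), hp]
  ring
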